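/- arXiv:2109.01735 — 3 statements merged into one kernel-verified Lean document; each statement's English description precedes it below -/
import Mathlib

section
/- Let k ≥ 0 and let (a_1,…,a_n) be a k-Naples parking function under which car c_j parks in spot d_j for each 1 ≤ j ≤ n. Fix 1 ≤ i ≤ n and let p_1,…,p_i be distinct elements of {1,…,n} such that p_j = d_j for every j ≤ i except for exactly one index l ≤ i, for which p_l < d_l. Then, starting from the configuration in which spots p_1,…,p_i are already occupied, the cars c_{i+1},…,c_n with preferences a_{i+1},…,a_n all successfully park under the k-Naples parking rule. -/
/-!
Replacing `d_l` by `p_l < d_l` moves one occupied spot `e` down to a free spot `e' < e`, and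
this relation between occupied sets survives every further car. A car with preference `p` tries
the spots in the order `p, p - 1, …, max (p - k) 1, p + 1, …, n`, which avoids the patterns
`132` and `312`. Hence if it parks at `s` in the original configuration and at `s'` in the
modified one, then `s' = s`, or `s = e'` and `s' ≤ e`, or `s' = e` and `e' < s`; in each case
the new occupied sets are again equal or related by a move down. The modified configuration
always has a free spot in the car's range (`s`, or `e` if `s = e'`), so the car parks there
whenever it parks in the original one.
-/

/-- The spots a car with preference `p` checks backward: `p-1, p-2, …, max(p-k,1)`. -/
def backCandidates (k p : ℕ) : List ℕ :=
  ((List.range k).map (fun i => p - (i + 1))).filter (fun s => decide (1 ≤ s))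

/-- The spots a car with preference `p` checks when driving forward: `p+1, …, n`. -/
def fwdCandidates (n p : ℕ) : List ℕ :=
  List.range' (p + 1) (n - p)

/-- The spot in which a car with preference `p` parks under the `k`-Naples rule on a
one-way street with `n` spots, given the set `occ` of already occupied spots
(`none` if the car fails to park). -/
def naplesStep (k n : ℕ) (occ : Finset ℕ) (p : ℕ) : Option ℕ :=
  if p ∈ occ then
    match (backCandidates k p).filter (fun s => decide (s ∉ occ)) with
    | s :: _ => some s
    | [] =>
      match (fwdCandidates n p).filter (fun s => decide (s ∉ occ)) with
      | s :: _ => some s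
      | [] => none
  else some p

/-- Runs the `k`-Naples parking process starting from occupied set `occ` for cars with
the given list of preferences.  Returns the list of spots in which the successive cars
park, or `none` if some car fails to park. -/
def naplesSpots (k n : ℕ) : Finset ℕ → List ℕ → Option (List ℕ)
  | _, [] => some []
  | occ, p :: rest =>
    match naplesStep k n occ p with
    | none => none
    | some s => (naplesSpots k n (insert s occ) rest).map (fun l => s :: l)

/-- All cars with the given preferences successfully park, starting from occupied set `occ`. -/
def ParksAllFrom (k n : ℕ) (occ : Finset ℕ) (prefs : List ℕ) : Prop :=
  (naplesSpots k n occ prefs).isSome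

/-- A parking preference of length `n`: a list of `n` numbers in `{1, …, n}`. -/
def IsParkingPref (n : ℕ) (prefs : List ℕ) : Prop :=
  prefs.length = n ∧ ∀ p ∈ prefs, 1 ≤ p ∧ p ≤ n

/-- A `k`-Naples parking function of length `n`. -/
def IsNaplesPF (k n : ℕ) (prefs : List ℕ) : Prop :=
  IsParkingPref n prefs ∧ ParksAllFrom k n ∅ prefs


theorem List.find?_eq_some_iff_of_pairwise {α β : Type*} [Preorder β] {f : α → β}
    {l : List α} (hl : l.Pairwise (f · < f ·)) (q : α → Bool) (s : α) :
    l.find? q = some s ↔ s ∈ l ∧ q s ∧ ∀ t ∈ l, f t < f s → q t = false := by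
  induction l with
  | nil => simp
  | cons c l ih =>
    rw [List.pairwise_cons] at hl
    by_cases hc : q c
    · rw [List.find?_cons_of_pos hc, Option.some.injEq]
      constructor
      · rintro rfl
        refine ⟨List.mem_cons_self, hc, fun t ht hts => ?_⟩
        rcases List.mem_cons.mp ht with rfl | ht
        · exact absurd hts (lt_irrefl _)
        · exact absurd (hl.1 t ht) (lt_asymm hts)
      · rintro ⟨hs, hqs, hmin⟩
        rcases List.mem_cons.mp hs with rfl | hs
        · rfl
        · simpa [hc] using hmin c List.mem_cons_self (hl.1 s hs)
    · rw [List.find?_cons_of_neg hc, ih hl.2]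
      constructor
      · rintro ⟨hs, hqs, hmin⟩
        refine ⟨List.mem_cons_of_mem _ hs, hqs, fun t ht hts => ?_⟩
        rcases List.mem_cons.mp ht with rfl | ht
        · simpa using hc
        · exact hmin t ht hts
      · rintro ⟨hs, hqs, hmin⟩
        rcases List.mem_cons.mp hs with rfl | hs
        · exact absurd hqs hc
        · exact ⟨hs, hqs, fun t ht => hmin t (List.mem_cons_of_mem _ ht)⟩

theorem List.toFinset_eq_insert_erase_of_getElem_eq {α : Type*} [DecidableEq α] {l l' : List α}
    (hlen : l'.length = l.length) (hnd : l.Nodup) {i : ℕ} (hi : i < l.length)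
    (heq : ∀ j (hj : j < l.length), j ≠ i → l'[j] = l[j]) :
    l'.toFinset = insert l'[i] (l.toFinset.erase l[i]) := by
  ext x
  simp only [List.mem_toFinset, Finset.mem_insert, Finset.mem_erase, List.mem_iff_getElem]
  constructor
  · rintro ⟨j, hj, rfl⟩
    by_cases hji : j = i
    · exact Or.inl (by simp [hji])
    · refine Or.inr ⟨?_, j, by omega, (heq j (by omega) hji).symm⟩
      rw [heq j (by omega) hji, Ne, hnd.getElem_inj_iff]
      exact hji
  · rintro (rfl | ⟨hxi, j, hj, rfl⟩)
    · exact ⟨i, by omega, rfl⟩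
    · have hji : j ≠ i := by rintro rfl; exact hxi rfl
      exact ⟨j, by omega, heq j hj hji⟩

theorem List.getElem_notMem_of_getElem_eq {α : Type*} {l l' : List α}
    (hlen : l'.length = l.length) (hnd' : l'.Nodup) {i : ℕ} (hi : i < l.length)
    (hne : l'[i] ≠ l[i]) (heq : ∀ j (hj : j < l.length), j ≠ i → l'[j] = l[j]) :
    l'[i] ∉ l := by
  rw [List.mem_iff_getElem]
  rintro ⟨j, hj, hji⟩
  have hji' : j ≠ i := by rintro rfl; exact hne hji.symm
  rw [← heq j hj hji', hnd'.getElem_inj_iff] at hji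
  exact hji' hji

theorem mem_backCandidates {k p t : ℕ} :
    t ∈ backCandidates k p ↔ 1 ≤ t ∧ p - k ≤ t ∧ t < p := by
  simp only [backCandidates, List.mem_filter, List.mem_map, List.mem_range, decide_eq_true_eq]
  constructor
  · rintro ⟨⟨i, hi, rfl⟩, h1⟩
    omega
  · rintro ⟨h1, h2, h3⟩
    exact ⟨⟨p - t - 1, by omega, by omega⟩, h1⟩

theorem pairwise_backCandidates (k p : ℕ) : (backCandidates k p).Pairwise (· > ·) := by
  rw [backCandidates, List.pairwise_filter, List.pairwise_map]
  refine List.pairwise_lt_range.imp_of_mem fun _ _ _ _ => ?_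
  simp only [decide_eq_true_eq]
  omega

theorem mem_fwdCandidates {n p t : ℕ} : t ∈ fwdCandidates n p ↔ p < t ∧ t ≤ n := by
  simp only [fwdCandidates, List.mem_range'_1]
  omega

theorem pairwise_fwdCandidates (n p : ℕ) : (fwdCandidates n p).Pairwise (· < ·) :=
  List.pairwise_lt_range'

def naplesOrder (k n p : ℕ) : List ℕ :=
  p :: (backCandidates k p ++ fwdCandidates n p)

/-- The position of spot `t` in `naplesOrder k n p`, up to a monotone reindexing. -/
def naplesRank (k p t : ℕ) : ℕ :=
  if t ≤ p then p - t else k + (t - p)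

theorem naplesStep_eq_find? (k n : ℕ) (O : Finset ℕ) (p : ℕ) :
    naplesStep k n O p = (naplesOrder k n p).find? (· ∉ O) := by
  unfold naplesStep naplesOrder
  by_cases hp : p ∈ O
  · rw [if_pos hp, List.find?_cons_of_neg (by simpa using hp), List.find?_append,
      ← List.head?_filter, ← List.head?_filter]
    cases (backCandidates k p).filter (· ∉ O) <;>
      cases (fwdCandidates n p).filter (· ∉ O) <;> rfl
  · rw [if_neg hp, List.find?_cons_of_pos (by simpa using hp)]

theorem pairwise_naplesOrder (k n p : ℕ) :
    (naplesOrder k n p).Pairwise (naplesRank k p · < naplesRank k p ·) := by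
  simp only [naplesOrder, List.pairwise_cons, List.mem_append, List.pairwise_append,
    mem_backCandidates, mem_fwdCandidates]
  refine ⟨fun t ht => ?_, ⟨(pairwise_backCandidates k p).imp_of_mem fun ha hb hab => ?_,
    (pairwise_fwdCandidates n p).imp_of_mem fun ha hb hab => ?_, fun a ha b hb => ?_⟩⟩
  on_goal 2 => rw [mem_backCandidates] at ha hb
  on_goal 3 => rw [mem_fwdCandidates] at ha hb
  all_goals unfold naplesRank; split_ifs <;> omega

section NaplesOrder

variable {k n p : ℕ}

theorem mem_naplesOrder (hp1 : 1 ≤ p) (hpn : p ≤ n) {t : ℕ} :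
    t ∈ naplesOrder k n p ↔ 1 ≤ t ∧ p - k ≤ t ∧ t ≤ n := by
  simp only [naplesOrder, List.mem_cons, List.mem_append, mem_backCandidates, mem_fwdCandidates]
  omega

theorem naplesRank_injOn (hp1 : 1 ≤ p) (hpn : p ≤ n) {s t : ℕ} (hs : s ∈ naplesOrder k n p)
    (ht : t ∈ naplesOrder k n p) (h : naplesRank k p s = naplesRank k p t) : s = t := by
  rw [mem_naplesOrder hp1 hpn] at hs ht
  unfold naplesRank at h
  split_ifs at h <;> omega

end NaplesOrder

section NaplesStep

variable {k n p : ℕ} {O : Finset ℕ}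

theorem naplesStep_eq_some_iff {s : ℕ} :
    naplesStep k n O p = some s ↔ s ∈ naplesOrder k n p ∧ s ∉ O ∧
      ∀ t ∈ naplesOrder k n p, t ∉ O → naplesRank k p s ≤ naplesRank k p t := by
  rw [naplesStep_eq_find?,
    List.find?_eq_some_iff_of_pairwise (pairwise_naplesOrder k n p)]
  simp only [decide_eq_true_eq, decide_eq_false_iff_not, not_not]
  refine and_congr_right fun _ => and_congr_right fun _ => forall₂_congr fun t _ => ?_
  constructor
  · intro h htO
    by_contra hlt
    exact htO (h (by omega))
  · intro h hlt
    by_contra htO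
    exact absurd (h htO) (by omega)

theorem naplesStep_isSome_iff :
    (naplesStep k n O p).isSome ↔ ∃ t ∈ naplesOrder k n p, t ∉ O := by
  simp [naplesStep_eq_find?, List.find?_isSome]

theorem naplesRank_lt_of_naplesStep_eq_some (hp1 : 1 ≤ p) (hpn : p ≤ n) {s t : ℕ}
    (hs : naplesStep k n O p = some s) (ht : t ∈ naplesOrder k n p) (htO : t ∉ O)
    (hts : t ≠ s) : naplesRank k p s < naplesRank k p t := by
  obtain ⟨hsL, -, hmin⟩ := naplesStep_eq_some_iff.mp hs
  exact lt_of_le_of_ne (hmin t ht htO) fun h => hts (naplesRank_injOn hp1 hpn ht hsL h.symm)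

end NaplesStep

/-! The search order `p, p - 1, …, p - k, p + 1, …, n` avoids the patterns `132` and `312`. -/

theorem lt_of_naplesRank_lt_of_lt {k p x y z : ℕ} (hxy : naplesRank k p x < naplesRank k p y)
    (hyz : naplesRank k p y < naplesRank k p z) (hxz : x < z) : y < z := by
  unfold naplesRank at hxy hyz
  split_ifs at hxy hyz <;> omega

theorem lt_of_naplesRank_lt_of_gt {k p x y z : ℕ} (hxy : naplesRank k p x < naplesRank k p y)
    (hyz : naplesRank k p y < naplesRank k p z) (hzx : z < x) : z < y := by
  unfold naplesRank at hxy hyz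
  split_ifs at hxy hyz <;> omega

def MovedDown (n : ℕ) (O O' : Finset ℕ) : Prop :=
  O' = O ∨ ∃ e ∈ O, e ≤ n ∧ ∃ e' < e, e' ∉ O ∧ O' = insert e' (O.erase e)

section InsertErase

variable {k n p : ℕ} {O : Finset ℕ} {e e' s s' : ℕ}

theorem naplesStep_insert_erase_eq (hp1 : 1 ≤ p) (hpn : p ≤ n)
    (hs : naplesStep k n O p = some s) (hs' : naplesStep k n (insert e' (O.erase e)) p = some s')
    (hse' : s ≠ e') (hs'e : s' ≠ e) : s' = s := by
  obtain ⟨hsL, hsO, -⟩ := naplesStep_eq_some_iff.mp hs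
  obtain ⟨hs'L, hs'O', -⟩ := naplesStep_eq_some_iff.mp hs'
  simp only [Finset.mem_insert, Finset.mem_erase, not_or, not_and] at hs'O'
  by_contra hne
  have := naplesRank_lt_of_naplesStep_eq_some hp1 hpn hs hs'L (hs'O'.2 hs'e) hne
  have := naplesRank_lt_of_naplesStep_eq_some hp1 hpn hs' hsL (by simp [hse', hsO]) (Ne.symm hne)
  omega

theorem naplesStep_insert_erase_lt_of_eq (hp1 : 1 ≤ p) (hpn : p ≤ n) (hen : e ≤ n)
    (he'e : e' < e) (hs : naplesStep k n O p = some e')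
    (hs' : naplesStep k n (insert e' (O.erase e)) p = some s') (hs'e : s' ≠ e) : s' < e := by
  obtain ⟨he'L, -, -⟩ := naplesStep_eq_some_iff.mp hs
  obtain ⟨hs'L, hs'O', -⟩ := naplesStep_eq_some_iff.mp hs'
  have heL : e ∈ naplesOrder k n p := by
    rw [mem_naplesOrder hp1 hpn] at he'L ⊢
    omega
  simp only [Finset.mem_insert, Finset.mem_erase, not_or, not_and] at hs'O'
  have he's' := naplesRank_lt_of_naplesStep_eq_some hp1 hpn hs hs'L (hs'O'.2 hs'e) hs'O'.1
  have hs'e := naplesRank_lt_of_naplesStep_eq_some hp1 hpn hs' heL (by simp [he'e.ne'])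
    (Ne.symm hs'e)
  exact lt_of_naplesRank_lt_of_lt he's' hs'e he'e

theorem lt_naplesStep_of_insert_erase_eq (hp1 : 1 ≤ p) (hpn : p ≤ n) (hen : e ≤ n)
    (heO : e ∈ O) (he'O : e' ∉ O) (he'e : e' < e) (hs : naplesStep k n O p = some s)
    (hs' : naplesStep k n (insert e' (O.erase e)) p = some e) (hse' : s ≠ e') : e' < s := by
  obtain ⟨hsL, hsO, -⟩ := naplesStep_eq_some_iff.mp hs
  by_cases he'L : e' ∈ naplesOrder k n p
  · have hes := naplesRank_lt_of_naplesStep_eq_some hp1 hpn hs' hsL (by simp [hse', hsO])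
      (by rintro rfl; exact hsO heO)
    have hse' := naplesRank_lt_of_naplesStep_eq_some hp1 hpn hs he'L he'O (Ne.symm hse')
    exact lt_of_naplesRank_lt_of_gt hes hse' he'e
  · rw [mem_naplesOrder hp1 hpn] at hsL he'L
    omega

end InsertErase

theorem exists_naplesStep_movedDown {k n p : ℕ} (hp1 : 1 ≤ p) (hpn : p ≤ n)
    {O O' : Finset ℕ} (hO : MovedDown n O O') {s : ℕ} (hs : naplesStep k n O p = some s) :
    ∃ s', naplesStep k n O' p = some s' ∧ MovedDown n (insert s O) (insert s' O') := by
  rcases hO with rfl | ⟨e, heO, hen, e', he'e, he'O, rfl⟩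
  · exact ⟨s, hs, Or.inl rfl⟩
  obtain ⟨hsL, hsO, -⟩ := naplesStep_eq_some_iff.mp hs
  have hfree : ∃ t ∈ naplesOrder k n p, t ∉ insert e' (O.erase e) := by
    by_cases hse' : s = e'
    · refine ⟨e, ?_, by simp [he'e.ne']⟩
      rw [mem_naplesOrder hp1 hpn] at hsL ⊢
      omega
    · exact ⟨s, hsL, by simp [hse', hsO]⟩
  obtain ⟨s', hs'⟩ := Option.isSome_iff_exists.mp (naplesStep_isSome_iff.mpr hfree)
  refine ⟨s', hs', ?_⟩
  by_cases hse' : s = e'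
  · subst hse'
    by_cases hs'e : s' = e
    · left
      rw [hs'e, Finset.insert_comm, Finset.insert_erase heO]
    · right
      refine ⟨e, Finset.mem_insert_of_mem heO, hen, s',
        naplesStep_insert_erase_lt_of_eq hp1 hpn hen he'e hs hs' hs'e, ?_, ?_⟩
      · obtain ⟨-, hs'O', -⟩ := naplesStep_eq_some_iff.mp hs'
        simp only [Finset.mem_insert, Finset.mem_erase, not_or, not_and] at hs'O' ⊢
        exact ⟨hs'O'.1, hs'O'.2 hs'e⟩
      rw [Finset.erase_insert_of_ne he'e.ne]
  · right
    by_cases hs'e : s' = e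
    · subst hs'e
      refine ⟨s, Finset.mem_insert_self s O, ((mem_naplesOrder hp1 hpn).mp hsL).2.2, e',
        lt_naplesStep_of_insert_erase_eq hp1 hpn hen heO he'O he'e hs hs' hse',
        by simp [Ne.symm hse', he'O], ?_⟩
      rw [Finset.erase_insert hsO, Finset.insert_comm, Finset.insert_erase heO]
    · obtain rfl := naplesStep_insert_erase_eq hp1 hpn hs hs' hse' hs'e
      refine ⟨e, Finset.mem_insert_of_mem heO, hen, e', he'e, by simp [Ne.symm hse', he'O], ?_⟩
      rw [Finset.erase_insert_of_ne (by rintro rfl; exact hsO heO), Finset.insert_comm]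

section NaplesSpots

variable {k n : ℕ}

theorem naplesSpots_cons_eq_some {O : Finset ℕ} {q : ℕ} {prefs d : List ℕ} :
    naplesSpots k n O (q :: prefs) = some d ↔ ∃ s, naplesStep k n O q = some s ∧
      ∃ d', naplesSpots k n (insert s O) prefs = some d' ∧ d = s :: d' := by
  rw [naplesSpots]
  cases naplesStep k n O q <;> simp [eq_comm]

theorem parksAllFrom_cons {O : Finset ℕ} {q : ℕ} {prefs : List ℕ} :
    ParksAllFrom k n O (q :: prefs) ↔
      ∃ s, naplesStep k n O q = some s ∧ ParksAllFrom k n (insert s O) prefs := by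
  simp only [ParksAllFrom, naplesSpots]
  cases naplesStep k n O q <;> simp

theorem length_of_naplesSpots_eq_some :
    ∀ {O : Finset ℕ} {prefs d : List ℕ}, naplesSpots k n O prefs = some d →
      d.length = prefs.length
  | _, [], _, h => by cases h; simp
  | _, _ :: _, _, h => by
    obtain ⟨_, -, _, hd', rfl⟩ := naplesSpots_cons_eq_some.mp h
    simp [length_of_naplesSpots_eq_some hd']

theorem nodup_of_naplesSpots_eq_some :
    ∀ {O : Finset ℕ} {prefs d : List ℕ}, naplesSpots k n O prefs = some d →
      d.Nodup ∧ ∀ x ∈ d, x ∉ O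
  | _, [], _, h => by cases h; simp
  | _, _ :: _, _, h => by
    obtain ⟨s, hs, _, hd', rfl⟩ := naplesSpots_cons_eq_some.mp h
    obtain ⟨hnd, hdisj⟩ := nodup_of_naplesSpots_eq_some hd'
    have hsO := (naplesStep_eq_some_iff.mp hs).2.1
    refine ⟨List.nodup_cons.mpr ⟨fun hs' => hdisj s hs' (Finset.mem_insert_self s _), hnd⟩,
      ?_⟩
    rintro x (_ | ⟨_, hx⟩)
    · exact hsO
    · exact fun hxO => hdisj x hx (Finset.mem_insert_of_mem hxO)

theorem le_of_mem_naplesSpots :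
    ∀ {O : Finset ℕ} {prefs d : List ℕ}, (∀ q ∈ prefs, 1 ≤ q ∧ q ≤ n) →
      naplesSpots k n O prefs = some d → ∀ x ∈ d, x ≤ n
  | _, [], _, _, h => by cases h; simp
  | _, q :: _, _, hprefs, h => by
    obtain ⟨s, hs, _, hd', rfl⟩ := naplesSpots_cons_eq_some.mp h
    obtain ⟨hq1, hqn⟩ := hprefs q List.mem_cons_self
    rintro x (_ | ⟨_, hx⟩)
    · exact ((mem_naplesOrder hq1 hqn).mp (naplesStep_eq_some_iff.mp hs).1).2.2
    · exact le_of_mem_naplesSpots (fun q hq => hprefs q (List.mem_cons_of_mem _ hq)) hd' x hx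

theorem naplesSpots_drop :
    ∀ (i : ℕ) {O : Finset ℕ} {prefs d : List ℕ}, naplesSpots k n O prefs = some d →
      naplesSpots k n (O ∪ (d.take i).toFinset) (prefs.drop i) = some (d.drop i)
  | 0, _, _, _, h => by simpa using h
  | _ + 1, _, [], _, h => by cases h; rfl
  | i + 1, O, _ :: _, _, h => by
    obtain ⟨s, -, _, hd', rfl⟩ := naplesSpots_cons_eq_some.mp h
    simpa [Finset.union_insert, Finset.insert_union] using naplesSpots_drop i hd'

theorem ParksAllFrom.of_movedDown :
    ∀ {prefs : List ℕ} {O O' : Finset ℕ}, (∀ q ∈ prefs, 1 ≤ q ∧ q ≤ n) →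
      MovedDown n O O' → ParksAllFrom k n O prefs → ParksAllFrom k n O' prefs
  | [], _, _, _, _, _ => rfl
  | q :: _, _, _, hprefs, hO, h => by
    obtain ⟨hq1, hqn⟩ := hprefs q List.mem_cons_self
    obtain ⟨s, hs, hrest⟩ := parksAllFrom_cons.mp h
    obtain ⟨s', hs', hO'⟩ := exists_naplesStep_movedDown hq1 hqn hO hs
    exact parksAllFrom_cons.mpr ⟨s', hs',
      of_movedDown (fun q hq => hprefs q (List.mem_cons_of_mem _ hq)) hO' hrest⟩

end NaplesSpots

theorem movedDown_toFinset_of_getElem {n : ℕ} {q p : List ℕ} (hlen : p.length = q.length)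
    (hq : q.Nodup) (hp : p.Nodup) (hqn : ∀ x ∈ q, x ≤ n) {l : ℕ} (hl : l < q.length)
    (hless : p[l] < q[l]) (heq : ∀ j (hj : j < q.length), j ≠ l → p[j] = q[j]) :
    MovedDown n q.toFinset p.toFinset :=
  Or.inr ⟨q[l], List.mem_toFinset.mpr (List.getElem_mem _), hqn _ (List.getElem_mem _), p[l],
    hless, List.mem_toFinset.not.mpr
      (List.getElem_notMem_of_getElem_eq hlen hp hl hless.ne heq),
    List.toFinset_eq_insert_erase_of_getElem_eq hlen hq hl heq⟩

theorem statement0_general (k n : ℕ) (a d : List ℕ)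
    (ha : IsParkingPref n a) (hd : naplesSpots k n ∅ a = some d)
    (i : ℕ) (hin : i ≤ n)
    (p : List ℕ) (hplen : p.length = i) (hpnd : p.Nodup)
    (l : ℕ) (hl : l < i)
    (hless : p.getD l 0 < d.getD l 0)
    (heq : ∀ j < i, j ≠ l → p.getD j 0 = d.getD j 0) :
    ParksAllFrom k n p.toFinset (a.drop i) := by
  obtain ⟨ha_len, ha_mem⟩ := ha
  have hd_len : d.length = n := (length_of_naplesSpots_eq_some hd).trans ha_len
  have hq_len : (d.take i).length = i := by simp [hd_len, hin]
  have getD_p (j : ℕ) (hj : j < i) : p.getD j 0 = p[j] := List.getD_eq_getElem _ _ (by omega)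
  have getD_d (j : ℕ) (hj : j < i) : d.getD j 0 = (d.take i)[j] := by
    rw [List.getD_eq_getElem _ _ (by omega), List.getElem_take]
  have hmoved : MovedDown n (d.take i).toFinset p.toFinset :=
    movedDown_toFinset_of_getElem (by omega)
      ((nodup_of_naplesSpots_eq_some hd).1.sublist (List.take_sublist _ _)) hpnd
      (fun x hx => le_of_mem_naplesSpots ha_mem hd x (List.mem_of_mem_take hx))
      (by omega : l < (d.take i).length)
      (by rw [← getD_p l hl, ← getD_d l hl]; exact hless)
      (fun j hj hjl => by
        rw [← getD_p j (by omega), ← getD_d j (by omega)]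
        exact heq j (by omega) hjl)
  have hparks : ParksAllFrom k n (d.take i).toFinset (a.drop i) := by
    rw [ParksAllFrom, ← Finset.empty_union (d.take i).toFinset, naplesSpots_drop i hd]
    rfl
  exact hparks.of_movedDown (fun x hx => ha_mem x (List.mem_of_mem_drop hx)) hmoved

/-- Lemma on modified occupied configurations.
If `(a_1,…,a_n)` is a `k`-Naples parking function under which car `c_j` parks in spot `d_j`,
`1 ≤ i ≤ n`, and `p_1,…,p_i` are distinct spots in `{1,…,n}` with `p_j = d_j` for every
`j ≤ i` except exactly one index `l ≤ i` for which `p_l < d_l`, then starting from the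
configuration in which spots `p_1,…,p_i` are occupied, the cars `c_{i+1},…,c_n` with
preferences `a_{i+1},…,a_n` all successfully park under the `k`-Naples rule. -/
theorem statement0 (k n : ℕ) (a d : List ℕ)
    (ha : IsParkingPref n a) (hd : naplesSpots k n ∅ a = some d)
    (i : ℕ) (hi1 : 1 ≤ i) (hin : i ≤ n)
    (p : List ℕ) (hplen : p.length = i) (hpnd : p.Nodup)
    (hpmem : ∀ x ∈ p, 1 ≤ x ∧ x ≤ n)
    (l : ℕ) (hl : l < i)
    (hless : p.getD l 0 < d.getD l 0)
    (heq : ∀ j < i, j ≠ l → p.getD j 0 = d.getD j 0) :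
    ParksAllFrom k n p.toFinset (a.drop i) :=
  statement0_general k n a d ha hd i hin p hplen hpnd l hl hless heq
end

section
/- Let G(x) = Σ_{n≥0} binom(2n+1, n) x^n and let C(x) = Σ_{n≥0} C_n x^n be the generating function of the Catalan numbers. Then for every integer k ≥ 0, G(x)·(C(x)−1)^k = Σ_{n≥0} binom(2n+1, n+k+1) x^n as formal power series; that is, for all n ≥ 0 the n-th coefficient of G(x)·(C(x)−1)^k equals binom(2n+1, n+k+1). -/
/-!
Write `Sⱼ(x) = Σₙ binom(2n+j, n) xⁿ`, so that `G = S₁`. Comparing coefficients with the Catalan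
equation `C = 1 + x C²` and Pascal's rule `Sⱼ₊₁ = Sⱼ + x Sⱼ₊₂` gives `C Sⱼ = Sⱼ₊₁`, hence
`C^m Sⱼ = Sⱼ₊ₘ`. Since `C - 1 = x C²`, we get `G (C - 1)^k = x^k S₂ₖ₊₁`, whose `n`-th coefficient
is `binom(2n+1, n-k) = binom(2n+1, n+k+1)`.
-/

open PowerSeries Finset

noncomputable def shiftedCentralBinomSeries (j : ℕ) : PowerSeries ℕ :=
  mk fun n => (2 * n + j).choose n

@[simp]
lemma coeff_shiftedCentralBinomSeries (j n : ℕ) :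
    coeff n (shiftedCentralBinomSeries j) = (2 * n + j).choose n :=
  coeff_mk _ _

lemma shiftedCentralBinomSeries_succ (j : ℕ) :
    shiftedCentralBinomSeries (j + 1) =
      shiftedCentralBinomSeries j + X * shiftedCentralBinomSeries (j + 2) := by
  ext (_ | n)
  · rw [map_add, coeff_zero_X_mul]
    simp only [coeff_shiftedCentralBinomSeries, Nat.choose_zero_right, add_zero]
  · rw [map_add, coeff_succ_X_mul]
    simp only [coeff_shiftedCentralBinomSeries]
    rw [show 2 * (n + 1) + (j + 1) = (2 * n + j + 2) + 1 by ring, Nat.choose_succ_succ',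
      show 2 * (n + 1) + j = 2 * n + j + 2 by ring, show 2 * n + (j + 2) = 2 * n + j + 2 by ring,
      add_comm]

lemma catalanSeries_mul_shiftedCentralBinomSeries (j : ℕ) :
    catalanSeries * shiftedCentralBinomSeries j = shiftedCentralBinomSeries (j + 1) := by
  ext n
  induction n using Nat.strong_induction_on generalizing j with
  | _ n ih =>
  cases n with
  | zero => simp [coeff_mul]
  | succ n =>
    have hrec : catalanSeries * shiftedCentralBinomSeries j = shiftedCentralBinomSeries j +
        X * (catalanSeries * (catalanSeries * shiftedCentralBinomSeries j)) := by
      conv_lhs => rw [← catalanSeries_sq_mul_X_add_one]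
      ring
    -- the inner product only involves coefficients of degree `≤ n`, where the hypothesis applies
    have hlow : coeff n (catalanSeries * (catalanSeries * shiftedCentralBinomSeries j)) =
        coeff n (catalanSeries * shiftedCentralBinomSeries (j + 1)) := by
      rw [coeff_mul, coeff_mul]
      refine sum_congr rfl fun p hp => ?_
      rw [ih p.2 (by have := mem_antidiagonal.mp hp; omega) j]
    rw [hrec, map_add, coeff_succ_X_mul, hlow, ih n (by omega), shiftedCentralBinomSeries_succ j,
      map_add, coeff_succ_X_mul]

lemma catalanSeries_pow_mul_shiftedCentralBinomSeries (m j : ℕ) :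
    catalanSeries ^ m * shiftedCentralBinomSeries j = shiftedCentralBinomSeries (j + m) := by
  induction m generalizing j with
  | zero => simp
  | succ m ih =>
    rw [pow_succ, mul_assoc, catalanSeries_mul_shiftedCentralBinomSeries, ih, add_assoc, add_comm 1]

lemma coeff_shiftedCentralBinomSeries_one_mul_X_mul_catalanSeries_sq_pow (k n : ℕ) :
    coeff n (shiftedCentralBinomSeries 1 * (X * catalanSeries ^ 2) ^ k) =
      (2 * n + 1).choose (n + k + 1) := by
  rw [mul_pow, ← pow_mul, mul_left_comm, mul_comm (shiftedCentralBinomSeries 1),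
    catalanSeries_pow_mul_shiftedCentralBinomSeries, coeff_X_pow_mul']
  split_ifs with hk
  · rw [coeff_shiftedCentralBinomSeries, show 2 * (n - k) + (1 + 2 * k) = 2 * n + 1 by omega,
      show n - k = 2 * n + 1 - (n + k + 1) by omega, Nat.choose_symm (by omega)]
  · rw [Nat.choose_eq_zero_of_lt (by omega)]

/-- Let `G(x) = Σ_{n≥0} binom(2n+1, n) xⁿ` and let `C(x)` be the
generating function of the Catalan numbers.  For every `k ≥ 0` and `n ≥ 0`, the `n`-th
coefficient of `G(x)·(C(x) − 1)^k` equals `binom(2n+1, n+k+1)`. -/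
theorem statement14 (k n : ℕ) :
    PowerSeries.coeff (R := ℤ) n
        ((PowerSeries.mk fun m => ((2 * m + 1).choose m : ℤ)) *
          ((PowerSeries.mk fun m => (catalan m : ℤ)) - 1) ^ k) =
      ((2 * n + 1).choose (n + k + 1) : ℤ) := by
  have hG : (mk fun m => ((2 * m + 1).choose m : ℤ)) =
      map (Nat.castRingHom ℤ) (shiftedCentralBinomSeries 1) := by
    ext; simp
  have hC : (mk fun m => (catalan m : ℤ)) - 1 =
      map (Nat.castRingHom ℤ) (X * catalanSeries ^ 2) := by
    refine sub_eq_of_eq_add' ?_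
    rw [← map_one (map (Nat.castRingHom ℤ)), ← map_add, add_comm, mul_comm,
      catalanSeries_sq_mul_X_add_one]
    ext; simp
  rw [hG, hC, ← map_pow, ← map_mul, coeff_map,
    coeff_shiftedCentralBinomSeries_one_mul_X_mul_catalanSeries_sq_pow, eq_natCast]
end

section
/- For all integers k ≥ 0 and n ≥ 1, the total number of descending k-Naples parking functions of length n equals binom(2n−1, n) − binom(2n−1, n+k+1). -/
/-!
A weakly decreasing preference `f` parks exactly when `f[i] + i ≤ n + k` for every `i`. If car `i`
fails, all of `[max 1 (f[i] - k), n]` is occupied by the `i` earlier cars, which is impossible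
under these bounds. Conversely the cars `0, …, i` all prefer a spot `≥ f[i]`, hence each parks in
`[f[i] - k, n]`, and these `i + 1` distinct spots force the bound.

Weakly decreasing lists of length `m` with entries in `[1, B]` and `l[i] + i ≤ c` are counted by
their first entry; summing with the hockey-stick identity gives
`binom(B + m - 1, m) - binom(B + m - 1, c + 1)` whenever `m, B ≤ c + 1`, and `m = B = n`,
`c = n + k` is the theorem.
-/

theorem Nat.sum_Icc_add_sub_one_choose (m d : ℕ) : ∀ B : ℕ,
    ∑ v ∈ Finset.Icc 1 B, (v + m - 1).choose d + m.choose (d + 1) = (B + m).choose (d + 1)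
  | 0 => by simp
  | B + 1 => by
    rw [Finset.sum_Icc_succ_top (by omega), add_right_comm, Nat.sum_Icc_add_sub_one_choose m d B,
      show B + 1 + m = B + m + 1 by omega, Nat.choose_succ_succ', Nat.add_sub_cancel]
    ring

namespace Naples

open Finset

variable {k n p s : ℕ} {occ : Finset ℕ}

lemma mem_backCandidates : s ∈ backCandidates k p ↔ 1 ≤ s ∧ s < p ∧ p ≤ s + k := by
  simp only [backCandidates, List.mem_filter, List.mem_map, List.mem_range, decide_eq_true_eq]
  constructor
  · rintro ⟨⟨i, hi, rfl⟩, hs⟩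
    omega
  · exact fun h => ⟨⟨p - s - 1, by omega, by omega⟩, h.1⟩

lemma mem_fwdCandidates : s ∈ fwdCandidates n p ↔ p < s ∧ s ≤ n := by
  simp only [fwdCandidates, List.mem_range'_1]
  omega

lemma mem_of_match_cons {l : List ℕ} {x : Option ℕ}
    (h : (match l with | s :: _ => some s | [] => x) = some s) : s ∈ l ∨ x = some s := by
  split at h
  · exact .inl (Option.some.inj h ▸ List.mem_cons_self)
  · exact .inr h

lemma naplesStep_eq_some (h : naplesStep k n occ p = some s) :
    s ∉ occ ∧ (s = p ∨ s ∈ backCandidates k p ∨ s ∈ fwdCandidates n p) := by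
  unfold naplesStep at h
  split_ifs at h with hp
  · rcases mem_of_match_cons h with hs | hs
    · simp only [List.mem_filter, decide_eq_true_eq] at hs
      exact ⟨hs.2, .inr (.inl hs.1)⟩
    · rcases mem_of_match_cons hs with hs | hs
      · simp only [List.mem_filter, decide_eq_true_eq] at hs
        exact ⟨hs.2, .inr (.inr hs.1)⟩
      · simp at hs
  · exact ⟨Option.some.inj h ▸ hp, .inl (Option.some.inj h).symm⟩

lemma naplesStep_eq_none (h : naplesStep k n occ p = none) :
    p ∈ occ ∧ (∀ s ∈ backCandidates k p, s ∈ occ) ∧ ∀ s ∈ fwdCandidates n p, s ∈ occ := by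
  unfold naplesStep at h
  split_ifs at h with hp
  split at h
  · simp at h
  · rename_i hback
    split at h
    · simp at h
    · rename_i hfwd
      rw [List.filter_eq_nil_iff] at hback hfwd
      simp only [decide_eq_true_eq, not_not] at hback hfwd
      exact ⟨hp, hback, hfwd⟩

lemma naplesStep_eq_some_bounds (hp : p ≤ n) (h : naplesStep k n occ p = some s) :
    s ∉ occ ∧ p ≤ s + k ∧ s ≤ n := by
  obtain ⟨hs, rfl | hb | hf⟩ := naplesStep_eq_some h
  · exact ⟨hs, by omega, hp⟩
  · have := mem_backCandidates.mp hb
    exact ⟨hs, by omega, by omega⟩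
  · have := mem_fwdCandidates.mp hf
    exact ⟨hs, by omega, by omega⟩

lemma Icc_subset_of_naplesStep_eq_none (h : naplesStep k n occ p = none) :
    Icc (max 1 (p - k)) n ⊆ occ := by
  obtain ⟨hp, hback, hfwd⟩ := naplesStep_eq_none h
  intro t ht
  rw [mem_Icc] at ht
  rcases lt_trichotomy t p with htp | rfl | htp
  · exact hback t (mem_backCandidates.mpr (by omega))
  · exact hp
  · exact hfwd t (mem_fwdCandidates.mpr (by omega))

lemma parksAllFrom_cons {ps : List ℕ} :
    ParksAllFrom k n occ (p :: ps) ↔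
      ∃ s, naplesStep k n occ p = some s ∧ ParksAllFrom k n (insert s occ) ps := by
  rw [ParksAllFrom, naplesSpots]
  cases naplesStep k n occ p <;> simp [ParksAllFrom]

theorem parksAllFrom_of_le : ∀ {occ : Finset ℕ} {ps : List ℕ},
    #occ + ps.length ≤ n → (∀ i (hi : i < ps.length), ps[i] + (#occ + i) ≤ n + k) →
    ParksAllFrom k n occ ps
  | _, [], _, _ => rfl
  | occ, p :: ps, hlen, hps => by
    simp only [List.length_cons] at hlen
    have hp := hps 0 (by simp)
    simp only [List.getElem_cons_zero, Nat.add_zero] at hp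
    cases hstep : naplesStep k n occ p with
    | none =>
      have := card_le_card (Icc_subset_of_naplesStep_eq_none hstep)
      rw [Nat.card_Icc] at this
      omega
    | some s =>
      have hs := (naplesStep_eq_some hstep).1
      refine parksAllFrom_cons.mpr ⟨s, hstep, parksAllFrom_of_le ?_ fun i hi => ?_⟩
      · rw [card_insert_of_notMem hs]
        omega
      · have := hps (i + 1) (by simpa using hi)
        rw [List.getElem_cons_succ] at this
        rw [card_insert_of_notMem hs]
        omega

theorem countP_le_card_of_parksAllFrom (q : ℕ) : ∀ {occ : Finset ℕ} {ps : List ℕ},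
    (∀ p ∈ ps, p ≤ n) → ParksAllFrom k n occ ps →
    ps.countP (q ≤ ·) ≤ #(Icc (q - k) n \ occ)
  | _, [], _, _ => by simp
  | occ, p :: ps, hn, hpark => by
    obtain ⟨s, hstep, hpark⟩ := parksAllFrom_cons.mp hpark
    obtain ⟨hs, hps, hsn⟩ := naplesStep_eq_some_bounds (hn p List.mem_cons_self) hstep
    have ih := countP_le_card_of_parksAllFrom q (fun x hx => hn x (List.mem_cons_of_mem p hx))
      hpark
    rw [Finset.sdiff_insert] at ih
    by_cases hqp : q ≤ p
    · have hmem : s ∈ Icc (q - k) n \ occ := mem_sdiff.mpr ⟨mem_Icc.mpr ⟨by omega, hsn⟩, hs⟩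
      rw [List.countP_cons_of_pos (by simpa using hqp), ← card_erase_add_one hmem]
      omega
    · rw [List.countP_cons_of_neg (by simpa using hqp)]
      exact ih.trans card_erase_le

lemma succ_le_countP_of_pairwise_ge {f : List ℕ} (hdesc : f.Pairwise (fun a b => b ≤ a))
    {i : ℕ} (hi : i < f.length) : i + 1 ≤ f.countP (f[i] ≤ ·) := by
  have hlen : (f.take (i + 1)).length = i + 1 := by rw [List.length_take]; omega
  have hge : ∀ a ∈ f.take (i + 1), f[i] ≤ a := by
    intro a ha
    obtain ⟨j, hj, rfl⟩ := List.mem_iff_getElem.mp ha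
    rw [List.getElem_take]
    rcases Nat.lt_or_ge j i with hji | hji
    · exact List.pairwise_iff_getElem.mp hdesc j i _ hi hji
    · simp [show j = i by omega]
  calc i + 1 = (f.take (i + 1)).countP (f[i] ≤ ·) :=
        hlen ▸ (List.countP_eq_length.mpr (by simpa using hge)).symm
    _ ≤ f.countP (f[i] ≤ ·) := (List.take_sublist _ _).countP_le

theorem parksAllFrom_empty_iff_of_pairwise_ge {f : List ℕ} (hlen : f.length = n)
    (hn : ∀ p ∈ f, p ≤ n) (hdesc : f.Pairwise (fun a b => b ≤ a)) :
    ParksAllFrom k n ∅ f ↔ ∀ i (hi : i < f.length), f[i] + i ≤ n + k := by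
  refine ⟨fun hpark i hi => ?_, fun h => parksAllFrom_of_le (by simp [hlen]) (by simpa using h)⟩
  have := (succ_le_countP_of_pairwise_ge hdesc hi).trans
    (countP_le_card_of_parksAllFrom f[i] hn hpark)
  rw [Finset.sdiff_empty, Nat.card_Icc] at this
  omega

def boundedDescLists : ℕ → ℕ → ℕ → Finset (List ℕ)
  | 0, _, _ => {[]}
  | m + 1, B, c => (Icc 1 (min B c)).biUnion fun v => (boundedDescLists m v (c - 1)).image (v :: ·)

theorem mem_boundedDescLists : ∀ {m B c : ℕ} {l : List ℕ}, l ∈ boundedDescLists m B c ↔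
    l.length = m ∧ (∀ x ∈ l, 1 ≤ x ∧ x ≤ B) ∧ l.Pairwise (fun a b => b ≤ a) ∧
      ∀ i (hi : i < l.length), l[i] + i ≤ c
  | 0, _, _, l => by cases l <;> simp [boundedDescLists]
  | m + 1, _, _, [] => by simp [boundedDescLists]
  | m + 1, B, c, v :: t => by
    simp only [boundedDescLists, mem_biUnion, mem_image, List.cons.injEq, mem_Icc,
      mem_boundedDescLists]
    constructor
    · rintro ⟨_, ⟨hv1, hvB⟩, _, ⟨htlen, hbound, hdesc, hidx⟩, rfl, rfl⟩
      refine ⟨by simp [htlen], ?_, List.pairwise_cons.mpr ⟨fun x hx => (hbound x hx).2, hdesc⟩, ?_⟩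
      · simp only [List.mem_cons, forall_eq_or_imp]
        exact ⟨⟨hv1, by omega⟩, fun x hx => ⟨(hbound x hx).1, by have := (hbound x hx).2; omega⟩⟩
      · rintro (_ | i) hi
        · simp only [List.getElem_cons_zero]
          omega
        · have := hidx i (by simpa using hi)
          rw [List.getElem_cons_succ]
          omega
    · rintro ⟨hlen, hbound, hdesc, hidx⟩
      rw [List.pairwise_cons] at hdesc
      simp only [List.mem_cons, forall_eq_or_imp] at hbound
      have hv := hidx 0 (by simp)
      rw [List.getElem_cons_zero] at hv
      refine ⟨v, ⟨hbound.1.1, by omega⟩, t, ⟨by simpa using hlen,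
        fun x hx => ⟨(hbound.2 x hx).1, hdesc.1 x hx⟩, hdesc.2, fun i hi => ?_⟩, rfl, rfl⟩
      have := hidx (i + 1) (by simpa using hi)
      rw [List.getElem_cons_succ] at this
      omega

lemma card_boundedDescLists_succ (m B c : ℕ) :
    #(boundedDescLists (m + 1) B c) = ∑ v ∈ Icc 1 (min B c), #(boundedDescLists m v (c - 1)) := by
  rw [boundedDescLists, card_biUnion]
  · exact sum_congr rfl fun v _ => card_image_of_injective _ List.cons_injective
  · intro v _ w _ hvw
    simp only [Function.onFun, disjoint_left, mem_image]
    rintro _ ⟨_, _, rfl⟩ ⟨_, _, h⟩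
    exact hvw (List.cons.inj h).1.symm

theorem card_boundedDescLists_add_choose : ∀ {m B c : ℕ}, m ≤ c + 1 → B ≤ c + 1 →
    #(boundedDescLists m B c) + (B + m - 1).choose (c + 1) = (B + m - 1).choose m
  | 0, B, c, _, hB => by
    simp [boundedDescLists, Nat.choose_eq_zero_of_lt (show B - 1 < c + 1 by omega)]
  | m + 1, B, 0, hm, hB => by
    obtain rfl : m = 0 := by omega
    simp [card_boundedDescLists_succ]
  | m + 1, B, c + 1, hm, hB => by
    have hterm : ∀ v ∈ Icc 1 (min B (c + 1)), #(boundedDescLists m v c) + (v + m - 1).choose (c + 1)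
        = (v + m - 1).choose m := fun v hv =>
      card_boundedDescLists_add_choose (by omega) (by rw [mem_Icc] at hv; omega)
    have key : #(boundedDescLists (m + 1) B (c + 1)) + (min B (c + 1) + m).choose (c + 1 + 1)
        = (min B (c + 1) + m).choose (m + 1) := by
      rw [card_boundedDescLists_succ, ← Nat.sum_Icc_add_sub_one_choose m (c + 1),
        ← Nat.sum_Icc_add_sub_one_choose m m, ← sum_congr rfl hterm, sum_add_distrib,
        Nat.choose_eq_zero_of_lt (show m < c + 1 + 1 by omega),
        Nat.choose_eq_zero_of_lt (show m < m + 1 by omega), Nat.add_sub_cancel]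
      ring
    rw [show B + (m + 1) - 1 = B + m by omega]
    rcases Nat.lt_or_ge B (c + 2) with hB | hB
    · rwa [min_eq_left (by omega)] at key
    · -- the first entry is at most `c + 1` anyway, and the two formulas agree by Pascal's rule
      obtain rfl : B = c + 2 := by omega
      rw [min_eq_right (by omega)] at key
      have h1 : (c + 2 + m).choose (c + 1 + 1)
          = (c + 1 + m).choose (c + 1) + (c + 1 + m).choose (c + 1 + 1) := by
        rw [show c + 2 + m = c + 1 + m + 1 by omega, Nat.choose_succ_succ']
      have h2 : (c + 2 + m).choose (m + 1) = (c + 1 + m).choose m + (c + 1 + m).choose (m + 1) := by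
        rw [show c + 2 + m = c + 1 + m + 1 by omega, Nat.choose_succ_succ']
      have h3 := Nat.choose_symm_add (a := c + 1) (b := m)
      omega

theorem isNaplesPF_and_pairwise_iff {k n : ℕ} {f : List ℕ} :
    IsNaplesPF k n f ∧ f.Pairwise (fun a b => b ≤ a) ↔ f ∈ boundedDescLists n n (n + k) := by
  rw [mem_boundedDescLists, IsNaplesPF, IsParkingPref]
  constructor
  · rintro ⟨⟨⟨hlen, hbound⟩, hpark⟩, hdesc⟩
    exact ⟨hlen, hbound, hdesc, (parksAllFrom_empty_iff_of_pairwise_ge hlen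
      (fun p hp => (hbound p hp).2) hdesc).mp hpark⟩
  · rintro ⟨hlen, hbound, hdesc, hidx⟩
    exact ⟨⟨⟨hlen, hbound⟩, (parksAllFrom_empty_iff_of_pairwise_ge hlen
      (fun p hp => (hbound p hp).2) hdesc).mpr hidx⟩, hdesc⟩

end Naples

theorem statement16_general (k n : ℕ) :
    Set.ncard {f : List ℕ | IsNaplesPF k n f ∧ List.Pairwise (fun a b => b ≤ a) f} =
      (2 * n - 1).choose n - (2 * n - 1).choose (n + k + 1) := by
  have hset : {f : List ℕ | IsNaplesPF k n f ∧ List.Pairwise (fun a b => b ≤ a) f} =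
      ↑(Naples.boundedDescLists n n (n + k)) :=
    Set.ext fun _ => Naples.isNaplesPF_and_pairwise_iff
  have hcard := Naples.card_boundedDescLists_add_choose (m := n) (B := n) (c := n + k)
    (by omega) (by omega)
  rw [hset, Set.ncard_coe_finset, show 2 * n - 1 = n + n - 1 by omega]
  omega

/-- For all `k ≥ 0` and `n ≥ 1`, the total number of descending
`k`-Naples parking functions of length `n` equals
`binom(2n−1, n) − binom(2n−1, n+k+1)`. -/
theorem statement16 (k n : ℕ) (hn : 1 ≤ n) :
    Set.ncard {f : List ℕ | IsNaplesPF k n f ∧ List.Pairwise (fun a b => b ≤ a) f} =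
      (2 * n - 1).choose n - (2 * n - 1).choose (n + k + 1) :=
  statement16_general k n
end
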